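/- arXiv:1507.05896 — 2 statements merged into one kernel-verified Lean document; each statement's English description precedes it below -/
import Mathlib

section
/- For every integer n ≥ 0, the Somos-5 sequence satisfies a_n²·a_{n+6}² − 7·a_n·a_{n+2}·a_{n+4}·a_{n+6} + a_n·a_{n+4}³ + a_{n+2}³·a_{n+6} + 8·a_{n+2}²·a_{n+4}² = 0. -/
/-- The Somos-5 sequence. -/
def somos : ℕ → ℚ
  | 0 => 1
  | 1 => 1
  | 2 => 1
  | 3 => 1
  | 4 => 1
  | (m + 5) => (somos (m + 4) * somos (m + 1) + somos (m + 3) * somos (m + 2)) / somos m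

theorem somos_pos5 : ∀ n : ℕ, 0 < somos n ∧ 0 < somos (n + 1) ∧ 0 < somos (n + 2)
    ∧ 0 < somos (n + 3) ∧ 0 < somos (n + 4)
  | 0 => by norm_num [somos]
  | (n + 1) => by
    obtain ⟨h0, h1, h2, h3, h4⟩ := somos_pos5 n
    refine ⟨h1, h2, h3, h4, ?_⟩
    show 0 < somos (n + 5)
    rw [somos]
    exact div_pos (by positivity) h0

theorem somos_pos (n : ℕ) : 0 < somos n := (somos_pos5 n).1

theorem somos_rec (m : ℕ) :
    somos (m + 5) * somos m = somos (m + 4) * somos (m + 1) + somos (m + 3) * somos (m + 2) := by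
  rw [somos]
  exact div_mul_cancel₀ _ (somos_pos m).ne'

theorem somos_s5 : somos 5 = 2 := by rw [show (5:ℕ) = 0+5 from rfl, somos]; norm_num [somos]
theorem somos_s6 : somos 6 = 3 := by
  rw [show (6:ℕ) = 1+5 from rfl, somos]; norm_num [somos, somos_s5]
theorem somos_s7 : somos 7 = 5 := by
  rw [show (7:ℕ) = 2+5 from rfl, somos]
  norm_num [somos, somos_s5, somos_s6]
theorem somos_s8 : somos 8 = 11 := by
  rw [show (8:ℕ) = 3+5 from rfl, somos]
  norm_num [somos, somos_s5, somos_s6, somos_s7]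

theorem somos4_rel : ∀ n : ℕ,
    somos n * somos (n + 8) = somos (n + 2) * somos (n + 6) + 8 * somos (n + 4) ^ 2
  | 0 => by norm_num [somos, somos_s6, somos_s8]
  | (n + 1) => by
    have hK := somos4_rel n
    have h0 := somos_rec n
    have h1 := somos_rec (n + 1)
    have h2 := somos_rec (n + 2)
    have h3 := somos_rec (n + 3)
    have h4 := somos_rec (n + 4)
    have e0 : somos n ≠ 0 := (somos_pos n).ne'
    have e1 : somos (n + 1) ≠ 0 := (somos_pos (n + 1)).ne'
    have e2 : somos (n + 2) ≠ 0 := (somos_pos (n + 2)).ne'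
    have e3 : somos (n + 3) ≠ 0 := (somos_pos (n + 3)).ne'
    have e4 : somos (n + 4) ≠ 0 := (somos_pos (n + 4)).ne'
    have key : (somos n ^ 3 * somos (n + 1) ^ 2 * somos (n + 2) * somos (n + 3)
          * somos (n + 4) ^ 3) *
        (somos (n + 1) * somos (n + 9)
          - (somos (n + 3) * somos (n + 7) + 8 * somos (n + 5) ^ 2)) = 0 := by
      linear_combination (0 - (somos n)^3*(somos (n + 1))*(somos (n + 3))^2*(somos (n + 4))^3*(somos (n + 5)) - 2*(somos n)^3*(somos (n + 1))*(somos (n + 2))*(somos (n + 3))*(somos (n + 4))^2*(somos (n + 5))^2 - (somos n)^3*(somos (n + 1))*(somos (n + 2))^2*(somos (n + 4))*(somos (n + 5))^3 - (somos n)^3*(somos (n + 1))^2*(somos (n + 4))^3*(somos (n + 5))^2) * h0 + ((somos n)^3*(somos (n + 1))*(somos (n + 2))*(somos (n + 3))^2*(somos (n + 4))^2*(somos (n + 5)) + (somos n)^3*(somos (n + 1))*(somos (n + 2))^2*(somos (n + 3))*(somos (n + 4))*(somos (n + 5))^2 + 2*(somos n)^3*(somos (n + 1))^2*(somos (n + 3))*(somos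 (n + 4))^3*(somos (n + 5)) + (somos n)^3*(somos (n + 1))^2*(somos (n + 3))^2*(somos (n + 4))^2*(somos (n + 6)) + (somos n)^3*(somos (n + 1))^2*(somos (n + 2))*(somos (n + 4))^2*(somos (n + 5))^2 - (somos n)^4*(somos (n + 1))*(somos (n + 3))*(somos (n + 4))^2*(somos (n + 5))^2 - (somos n)^4*(somos (n + 1))*(somos (n + 2))*(somos (n + 4))*(somos (n + 5))^3) * h1 + (0 - (somos n)^3*(somos (n + 1))^2*(somos (n + 3))^2*(somos (n + 4))^3 + (somos n)^3*(somos (n + 1))^3*(somos (n + 4))^3*(somos (n + 5)) + (somos n)^3*(somos (n + 1))^3*(somos (n + 3))*(somos (n + 4))^2*(somos (n + 6)) - (somos n)^4*(somos (n + 1))^2*(somos (n + 4))^2*(somos (n + 5))^2) * h2 + ((somos n)^3*(somos (n + 1))^3*(somos (n + 2))*(somos (n + 4))^2*(somos (n + 5)) - (somos n)^4*(somos (n + 1))^2*(somos (n + 2))*(somos (n + 4))*(somos (n + 5))^2) * h3 + ((somos n)^3*(somos (n + 1))^3*(somos (n + 2))*(somos (n + 3))*(somos (n + 4))^2) * h4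 + ((somos n)^3*(somos (n + 1))^2*(somos (n + 2))*(somos (n + 3))*(somos (n + 4))*(somos (n + 5))^2) * hK
    have hm : (somos n ^ 3 * somos (n + 1) ^ 2 * somos (n + 2) * somos (n + 3)
        * somos (n + 4) ^ 3) ≠ 0 := by positivity
    have := (mul_eq_zero.mp key).resolve_left hm
    show somos (n + 1) * somos (n + 1 + 8) = somos (n + 1 + 2) * somos (n + 1 + 6)
      + 8 * somos (n + 1 + 4) ^ 2
    have h9 : n + 1 + 8 = n + 9 := by ring
    have h7 : n + 1 + 6 = n + 7 := by ring
    have h5 : n + 1 + 4 = n + 5 := by ring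
    have h3' : n + 1 + 2 = n + 3 := by ring
    rw [h9, h7, h5, h3']
    linarith [this]

theorem quartic_aux : ∀ n : ℕ,
    somos n ^ 2 * somos (n + 6) ^ 2
      - 7 * somos n * somos (n + 2) * somos (n + 4) * somos (n + 6)
      + somos n * somos (n + 4) ^ 3
      + somos (n + 2) ^ 3 * somos (n + 6)
      + 8 * somos (n + 2) ^ 2 * somos (n + 4) ^ 2 = 0
  | 0 => by norm_num [somos, somos_s6]
  | 1 => by norm_num [somos, somos_s5, somos_s7]
  | (n + 2) => by
    have hF := quartic_aux n
    have hrec := somos4_rel n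
    have hw : somos n ≠ 0 := (somos_pos n).ne'
    show somos (n + 2) ^ 2 * somos (n + 2 + 6) ^ 2
      - 7 * somos (n + 2) * somos (n + 2 + 2) * somos (n + 2 + 4) * somos (n + 2 + 6)
      + somos (n + 2) * somos (n + 2 + 4) ^ 3
      + somos (n + 2 + 2) ^ 3 * somos (n + 2 + 6)
      + 8 * somos (n + 2 + 2) ^ 2 * somos (n + 2 + 4) ^ 2 = 0
    have hi8 : n + 2 + 6 = n + 8 := by ring
    have hi4 : n + 2 + 2 = n + 4 := by ring
    have hi6 : n + 2 + 4 = n + 6 := by ring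
    rw [hi8, hi4, hi6]
    have key : somos n ^ 3 *
        (somos (n + 2) ^ 2 * somos (n + 8) ^ 2
          - 7 * somos (n + 2) * somos (n + 4) * somos (n + 6) * somos (n + 8)
          + somos (n + 2) * somos (n + 6) ^ 3
          + somos (n + 4) ^ 3 * somos (n + 8)
          + 8 * somos (n + 4) ^ 2 * somos (n + 6) ^ 2) = 0 := by
      linear_combination (somos n ^ 2 * somos (n + 8)) * hF
        + (somos (n + 2) ^ 2 * somos n ^ 2 * somos (n + 8)
            - somos n ^ 3 * somos (n + 6) ^ 2) * hrec
    have hm : somos n ^ 3 ≠ 0 := pow_ne_zero 3 hw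
    have := (mul_eq_zero.mp key).resolve_left hm
    linarith [this]

theorem somos5_quartic_relation (n : ℕ) :
    somos n ^ 2 * somos (n + 6) ^ 2
      - 7 * somos n * somos (n + 2) * somos (n + 4) * somos (n + 6)
      + somos n * somos (n + 4) ^ 3
      + somos (n + 2) ^ 3 * somos (n + 6)
      + 8 * somos (n + 2) ^ 2 * somos (n + 4) ^ 2 = 0 := quartic_aux n
end

section
/- Let k ≥ 3 and let M₀ = [[α,β,0],[γ,δ,0],[e,f,0]] ∈ M₃⁰(ℤ/2^kℤ) satisfy A(M₀) = B(M₀) = C(M₀) = 0 in ℤ/2^kℤ. If γ and δ are both even but at least one of α, β, e, f is odd (a unit in ℤ/2^kℤ), then η(M₀, k, K)/(8192·64^{K−3}) → 1/(6·64^{k−1}) as K → ∞. -/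
open Filter

/-- `ord2 K t`: the largest `j ≤ K` such that `t` is divisible by `2^j` in `ℤ/2^Kℤ`
(so `ord2 K 0 = K`). -/
noncomputable def ord2 (K : ℕ) (t : ZMod (2 ^ K)) : ℕ :=
  sSup {j : ℕ | j ≤ K ∧ (2 : ZMod (2 ^ K)) ^ j ∣ t}

/-- For `M = [[α,β,0],[γ,δ,0],[e,f,0]]`, `Af M = γf - δe`. -/
def Af {n : ℕ} (M : Matrix (Fin 3) (Fin 3) (ZMod n)) : ZMod n :=
  M 1 0 * M 2 1 - M 1 1 * M 2 0

/-- For `M = [[α,β,0],[γ,δ,0],[e,f,0]]`, `Bf M = αf - βe`. -/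
def Bf {n : ℕ} (M : Matrix (Fin 3) (Fin 3) (ZMod n)) : ZMod n :=
  M 0 0 * M 2 1 - M 0 1 * M 2 0

/-- For `M = [[α,β,0],[γ,δ,0],[e,f,0]]`, `Cf M = αδ - βγ`. -/
def Cf {n : ℕ} (M : Matrix (Fin 3) (Fin 3) (ZMod n)) : ZMod n :=
  M 0 0 * M 1 1 - M 0 1 * M 1 0

/-- `eta r K M₀` is the number of `3 × 3` matrices `M` over `ℤ/2^Kℤ` with third column zero,
reducing to `M₀` mod `2^r`, with `ord₂(A(M)) > ord₂(B(M))` and `ord₂(C(M)) > ord₂(B(M))`. -/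
noncomputable def eta (r K : ℕ) (M₀ : Matrix (Fin 3) (Fin 3) (ZMod (2 ^ r))) : ℕ :=
  Nat.card {M : Matrix (Fin 3) (Fin 3) (ZMod (2 ^ K)) //
    (∀ i, M i 2 = 0) ∧
    (∀ i j, (((M i j).val : ZMod (2 ^ r))) = M₀ i j) ∧
    ord2 K (Bf M) < ord2 K (Af M) ∧ ord2 K (Bf M) < ord2 K (Cf M)}


section helper
variable {k K : ℕ}

section ord2lemmas
variable {K : ℕ} {t x y : ZMod (2 ^ K)}

lemma ord2_set_bdd : BddAbove {j : ℕ | j ≤ K ∧ (2 : ZMod (2 ^ K)) ^ j ∣ t} :=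
  ⟨K, fun _ h => h.1⟩

lemma ord2_mem : ord2 K t ≤ K ∧ (2 : ZMod (2 ^ K)) ^ (ord2 K t) ∣ t := by
  have h0 : (0 : ℕ) ∈ {j : ℕ | j ≤ K ∧ (2 : ZMod (2 ^ K)) ^ j ∣ t} := by
    simp
  have := Nat.sSup_mem ⟨0, h0⟩ ord2_set_bdd
  exact this

lemma ord2_le : ord2 K t ≤ K := ord2_mem.1

lemma pow_ord2_dvd : (2 : ZMod (2 ^ K)) ^ (ord2 K t) ∣ t := ord2_mem.2

lemma le_ord2 {j : ℕ} (hj : j ≤ K) (hd : (2 : ZMod (2 ^ K)) ^ j ∣ t) :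
    j ≤ ord2 K t := le_csSup ord2_set_bdd ⟨hj, hd⟩

lemma ord2_lt_iff :
    ord2 K x < ord2 K y ↔ (2 : ZMod (2 ^ K)) ^ (ord2 K x + 1) ∣ y ∧ ord2 K x < K := by
  constructor
  · intro h
    exact ⟨dvd_trans (pow_dvd_pow 2 h) pow_ord2_dvd, lt_of_lt_of_le h ord2_le⟩
  · rintro ⟨hd, hK⟩
    exact lt_of_lt_of_le (Nat.lt_succ_self _) (le_ord2 hK hd)

lemma ord2_eq_iff {v : ℕ} (hv : v < K) :
    ord2 K x = v ↔ ((2 : ZMod (2 ^ K)) ^ v ∣ x ∧ ¬ (2 : ZMod (2 ^ K)) ^ (v + 1) ∣ x) := by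
  constructor
  · rintro rfl
    refine ⟨pow_ord2_dvd, fun hd => ?_⟩
    exact absurd (le_ord2 hv hd) (by omega)
  · rintro ⟨h1, h2⟩
    refine le_antisymm ?_ (le_ord2 hv.le h1)
    by_contra h
    exact h2 (dvd_trans (pow_dvd_pow 2 (by omega)) pow_ord2_dvd)

lemma ord2_neg : ord2 K (-x) = ord2 K x := by
  unfold ord2
  congr 1
  ext j
  simp [dvd_neg]

end ord2lemmas

section dvdval
variable {k K : ℕ}

lemma two_pow_cast (j K : ℕ) : (2 : ZMod (2 ^ K)) ^ j = ((2 ^ j : ℕ) : ZMod (2 ^ K)) := by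
  push_cast; ring

lemma self_cast_val {n : ℕ} [NeZero n] (x : ZMod n) : ((x.val : ℕ) : ZMod n) = x := by
  rw [ZMod.natCast_val, ZMod.cast_id]

lemma pow_dvd_iff_val {j : ℕ} (hj : j ≤ K) (x : ZMod (2 ^ K)) :
    (2 : ZMod (2 ^ K)) ^ j ∣ x ↔ 2 ^ j ∣ x.val := by
  haveI : NeZero (2 ^ K) := ⟨by positivity⟩
  have hjK : (2 : ℕ) ^ j ∣ 2 ^ K := pow_dvd_pow 2 hj
  constructor
  · rintro ⟨u, rfl⟩
    rw [ZMod.val_mul, Nat.dvd_mod_iff hjK, two_pow_cast, ZMod.val_natCast]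
    exact Dvd.dvd.mul_right ((Nat.dvd_mod_iff hjK).mpr dvd_rfl) _
  · rintro ⟨t, ht⟩
    rw [← self_cast_val x, ht]
    push_cast
    exact Dvd.intro _ rfl

lemma red_eq_castHom (hkK : k ≤ K) (x : ZMod (2 ^ K)) :
    ((x.val : ℕ) : ZMod (2 ^ k)) = ZMod.castHom (pow_dvd_pow 2 hkK) (ZMod (2 ^ k)) x := by
  haveI : NeZero (2 ^ K) := ⟨by positivity⟩
  rw [ZMod.castHom_apply, ← ZMod.natCast_val]

lemma red_zero_iff (hkK : k ≤ K) (x : ZMod (2 ^ K)) :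
    ZMod.castHom (pow_dvd_pow 2 hkK) (ZMod (2 ^ k)) x = 0 ↔ (2 : ZMod (2 ^ K)) ^ k ∣ x := by
  haveI : NeZero (2 ^ K) := ⟨by positivity⟩
  rw [← red_eq_castHom hkK, ZMod.natCast_eq_zero_iff, pow_dvd_iff_val hkK]

lemma isUnit_zmod_iff (hK : 1 ≤ K) (x : ZMod (2 ^ K)) : IsUnit x ↔ ¬ 2 ∣ x.val := by
  haveI : NeZero (2 ^ K) := ⟨by positivity⟩
  conv_lhs => rw [← self_cast_val x]
  rw [ZMod.isUnit_iff_coprime, Nat.coprime_pow_right_iff hK,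
    Nat.coprime_two_right, Nat.odd_iff, Nat.dvd_iff_mod_eq_zero]
  omega

lemma isUnit_red_iff (hk : 1 ≤ k) (hkK : k ≤ K) (x : ZMod (2 ^ K)) :
    IsUnit (ZMod.castHom (pow_dvd_pow 2 hkK) (ZMod (2 ^ k)) x) ↔ IsUnit x := by
  haveI : NeZero (2 ^ K) := ⟨by positivity⟩
  rw [isUnit_zmod_iff hk, isUnit_zmod_iff (hk.trans hkK), ← red_eq_castHom hkK,
    ZMod.val_natCast, Nat.dvd_mod_iff (dvd_pow_self 2 (by omega : k ≠ 0))]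

lemma two_dvd_of_not_isUnit (hk : 1 ≤ k) (hkK : k ≤ K) (x : ZMod (2 ^ K))
    (h : ¬ IsUnit (ZMod.castHom (pow_dvd_pow 2 hkK) (ZMod (2 ^ k)) x)) :
    (2 : ZMod (2 ^ K)) ∣ x := by
  haveI : NeZero (2 ^ K) := ⟨by positivity⟩
  rw [isUnit_red_iff hk hkK, isUnit_zmod_iff (hk.trans hkK), not_not] at h
  obtain ⟨t, ht⟩ := h
  rw [← self_cast_val x, ht]
  push_cast
  exact Dvd.intro _ rfl
end dvdval

section cards
variable {k K : ℕ}

lemma card_dvd_set {j : ℕ} (hj : j ≤ K) :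
    Nat.card {x : ZMod (2 ^ K) // (2 : ZMod (2 ^ K)) ^ j ∣ x} = 2 ^ (K - j) := by
  haveI : NeZero (2 ^ K) := ⟨by positivity⟩
  have hb : Function.Bijective (fun i : Fin (2 ^ (K - j)) =>
      (⟨((2 ^ j * (i : ℕ) : ℕ) : ZMod (2 ^ K)), by
        push_cast; exact Dvd.intro _ rfl⟩ : {x : ZMod (2 ^ K) // (2 : ZMod (2 ^ K)) ^ j ∣ x})) := by
    constructor
    · intro i i' h
      have hlt : ∀ i0 : Fin (2 ^ (K - j)), 2 ^ j * (i0 : ℕ) < 2 ^ K := by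
        intro i0
        calc 2 ^ j * (i0 : ℕ) < 2 ^ j * 2 ^ (K - j) :=
          (Nat.mul_lt_mul_left (Nat.two_pow_pos j)).mpr i0.isLt
        _ = 2 ^ K := by rw [← pow_add]; congr 1; omega
      have := congrArg (fun z : {x : ZMod (2 ^ K) // (2 : ZMod (2 ^ K)) ^ j ∣ x} => (z : ZMod (2 ^ K)).val) h
      simp only [ZMod.val_natCast] at this
      rw [Nat.mod_eq_of_lt (hlt i), Nat.mod_eq_of_lt (hlt i')] at this
      exact Fin.ext (Nat.eq_of_mul_eq_mul_left (Nat.two_pow_pos j) this)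
    · rintro ⟨x, hx⟩
      obtain ⟨t, ht⟩ := (pow_dvd_iff_val hj x).mp hx
      have htlt : t < 2 ^ (K - j) := by
        by_contra hc
        have : 2 ^ K ≤ 2 ^ j * t := by
          calc 2 ^ K = 2 ^ j * 2 ^ (K - j) := by rw [← pow_add]; congr 1; omega
          _ ≤ 2 ^ j * t := Nat.mul_le_mul_left _ (by omega)
        exact absurd (ht ▸ x.val_lt) (by omega)
      refine ⟨⟨t, htlt⟩, Subtype.ext ?_⟩
      simp only
      rw [← ht, self_cast_val]
  rw [← Nat.card_eq_of_bijective _ hb, Nat.card_eq_fintype_card, Fintype.card_fin]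

lemma card_lift_set (hkK : k ≤ K) (c : ZMod (2 ^ k)) :
    Nat.card {x : ZMod (2 ^ K) // ZMod.castHom (pow_dvd_pow 2 hkK) (ZMod (2 ^ k)) x = c}
      = 2 ^ (K - k) := by
  haveI : NeZero (2 ^ K) := ⟨by positivity⟩
  haveI : NeZero (2 ^ k) := ⟨by positivity⟩
  set c' : ZMod (2 ^ K) := ((c.val : ℕ) : ZMod (2 ^ K)) with hc'
  have hredc' : ZMod.castHom (pow_dvd_pow 2 hkK) (ZMod (2 ^ k)) c' = c := by
    rw [← red_eq_castHom hkK, hc', ZMod.val_natCast,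
      Nat.mod_eq_of_lt (lt_of_lt_of_le c.val_lt (Nat.pow_le_pow_right (by norm_num) hkK)),
      self_cast_val]
  have he : {x : ZMod (2 ^ K) // ZMod.castHom (pow_dvd_pow 2 hkK) (ZMod (2 ^ k)) x = c} ≃
      {y : ZMod (2 ^ K) // ZMod.castHom (pow_dvd_pow 2 hkK) (ZMod (2 ^ k)) y = 0} := by
    refine Equiv.subtypeEquiv (Equiv.subRight c') (fun x => ?_)
    simp only [Equiv.subRight_apply, map_sub, hredc', sub_eq_zero]
  rw [Nat.card_congr he]
  have : ∀ y : ZMod (2 ^ K), (ZMod.castHom (pow_dvd_pow 2 hkK) (ZMod (2 ^ k)) y = 0) ↔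
      ((2 : ZMod (2 ^ K)) ^ k ∣ y) := red_zero_iff hkK
  rw [Nat.card_congr (Equiv.subtypeEquivRight this), card_dvd_set hkK]


lemma filter_dvd_card {j : ℕ} (hj : j ≤ K) [DecidablePred fun x : ZMod (2 ^ K) => (2 : ZMod (2 ^ K)) ^ j ∣ x] :
    (Finset.univ.filter fun x : ZMod (2 ^ K) => (2 : ZMod (2 ^ K)) ^ j ∣ x).card = 2 ^ (K - j) := by
  haveI : NeZero (2 ^ K) := ⟨by positivity⟩
  rw [← Fintype.card_subtype, ← Nat.card_eq_fintype_card, card_dvd_set hj]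

lemma card_Q (hkK : k ≤ K) :
    Nat.card {p : ZMod (2 ^ K) × ZMod (2 ^ K) //
        (2 : ZMod (2 ^ K)) ^ k ∣ p.1 ∧ (2 : ZMod (2 ^ K)) ^ k ∣ p.2 ∧
        ord2 K p.1 < ord2 K p.2}
      = ∑ v ∈ Finset.Ico k K, 4 ^ (K - 1 - v) := by
  classical
  haveI : NeZero (2 ^ K) := ⟨by positivity⟩
  rw [Nat.card_eq_fintype_card, Fintype.card_subtype]
  have hsplit : (Finset.univ.filter fun p : ZMod (2 ^ K) × ZMod (2 ^ K) =>
        (2 : ZMod (2 ^ K)) ^ k ∣ p.1 ∧ (2 : ZMod (2 ^ K)) ^ k ∣ p.2 ∧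
        ord2 K p.1 < ord2 K p.2)
      = (Finset.Ico k K).biUnion (fun v => Finset.univ.filter
          fun p : ZMod (2 ^ K) × ZMod (2 ^ K) =>
            ((2 : ZMod (2 ^ K)) ^ v ∣ p.1 ∧ ¬ (2 : ZMod (2 ^ K)) ^ (v + 1) ∣ p.1) ∧
            (2 : ZMod (2 ^ K)) ^ (v + 1) ∣ p.2) := by
    ext p
    simp only [Finset.mem_filter, Finset.mem_biUnion, Finset.mem_univ, true_and,
      Finset.mem_Ico]
    constructor
    · rintro ⟨h1, h2, h3⟩
      refine ⟨ord2 K p.1, ⟨le_ord2 hkK h1, lt_of_lt_of_le h3 ord2_le⟩,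
        ⟨pow_ord2_dvd, fun hd => ?_⟩, (ord2_lt_iff.mp h3).1⟩
      have := le_ord2 (lt_of_lt_of_le h3 ord2_le) hd
      omega
    · rintro ⟨v, ⟨hkv, hvK⟩, ⟨hd1, hnd1⟩, hd2⟩
      have hord : ord2 K p.1 = v := (ord2_eq_iff hvK).mpr ⟨hd1, hnd1⟩
      refine ⟨dvd_trans (pow_dvd_pow 2 hkv) hd1,
        dvd_trans (pow_dvd_pow 2 (by omega)) hd2,
        ord2_lt_iff.mpr ⟨by rw [hord]; exact hd2, by omega⟩⟩
  rw [hsplit, Finset.card_biUnion]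
  · refine Finset.sum_congr rfl fun v hv => ?_
    rw [Finset.mem_Ico] at hv
    have hprod : (Finset.univ.filter fun p : ZMod (2 ^ K) × ZMod (2 ^ K) =>
          ((2 : ZMod (2 ^ K)) ^ v ∣ p.1 ∧ ¬ (2 : ZMod (2 ^ K)) ^ (v + 1) ∣ p.1) ∧
          (2 : ZMod (2 ^ K)) ^ (v + 1) ∣ p.2)
        = (Finset.univ.filter fun x : ZMod (2 ^ K) =>
            (2 : ZMod (2 ^ K)) ^ v ∣ x ∧ ¬ (2 : ZMod (2 ^ K)) ^ (v + 1) ∣ x) ×ˢ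
          (Finset.univ.filter fun y : ZMod (2 ^ K) => (2 : ZMod (2 ^ K)) ^ (v + 1) ∣ y) := by
      ext p
      simp only [Finset.mem_filter, Finset.mem_product, Finset.mem_univ, true_and]
    rw [hprod, Finset.card_product]
    have h1 : (Finset.univ.filter fun x : ZMod (2 ^ K) =>
          (2 : ZMod (2 ^ K)) ^ v ∣ x ∧ ¬ (2 : ZMod (2 ^ K)) ^ (v + 1) ∣ x).card
        = 2 ^ (K - v - 1) := by
      have hsd : (Finset.univ.filter fun x : ZMod (2 ^ K) =>
            (2 : ZMod (2 ^ K)) ^ v ∣ x ∧ ¬ (2 : ZMod (2 ^ K)) ^ (v + 1) ∣ x)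
          = (Finset.univ.filter fun x : ZMod (2 ^ K) => (2 : ZMod (2 ^ K)) ^ v ∣ x) \
            (Finset.univ.filter fun x : ZMod (2 ^ K) => (2 : ZMod (2 ^ K)) ^ (v + 1) ∣ x) := by
        ext x
        simp only [Finset.mem_filter, Finset.mem_sdiff, Finset.mem_univ, true_and]
      rw [hsd, Finset.card_sdiff_of_subset, filter_dvd_card (by omega : v ≤ K),
        filter_dvd_card (by omega : v + 1 ≤ K)]
      · obtain ⟨w, hw1, hw2⟩ : ∃ w, K - v = w + 1 ∧ K - (v + 1) = w :=
          ⟨K - v - 1, by omega, by omega⟩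
        rw [hw1, hw2, Nat.add_sub_cancel, pow_succ]
        omega
      · intro x hx
        simp only [Finset.mem_filter, Finset.mem_univ, true_and] at hx ⊢
        exact dvd_trans (pow_dvd_pow 2 (by omega)) hx
    rw [h1, filter_dvd_card (by omega : v + 1 ≤ K)]
    have : K - (v + 1) = K - v - 1 := by omega
    rw [this, ← pow_add]
    have : (4 : ℕ) = 2 ^ 2 := by norm_num
    rw [this, ← pow_mul]
    congr 1
    omega
  · intro v hv w hw hvw
    rw [Finset.mem_coe, Finset.mem_Ico] at hv hw
    simp only [Function.onFun, Finset.disjoint_left, Finset.mem_filter, Finset.mem_univ, true_and]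
    rintro p ⟨⟨hd1, hnd1⟩, -⟩ ⟨⟨hd1', hnd1'⟩, -⟩
    rcases Nat.lt_or_ge v w with h | h
    · exact hnd1 (dvd_trans (pow_dvd_pow 2 (by omega)) hd1')
    · have : w < v := by omega
      exact hnd1' (dvd_trans (pow_dvd_pow 2 (by omega)) hd1)

lemma my_sum_Ico_pow (hkK : k ≤ K) :
    3 * ∑ v ∈ Finset.Ico k K, 4 ^ (K - 1 - v) = 4 ^ (K - k) - 1 := by
  have hre : ∑ v ∈ Finset.Ico k K, 4 ^ (K - 1 - v)
      = ∑ i ∈ Finset.range (K - k), 4 ^ i := by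
    refine Finset.sum_nbij' (fun v => K - 1 - v) (fun i => K - 1 - i) ?_ ?_ ?_ ?_ ?_
    · intro v hv; rw [Finset.mem_Ico] at hv; rw [Finset.mem_range]; omega
    · intro i hi; rw [Finset.mem_range] at hi; rw [Finset.mem_Ico]; omega
    · intro v hv; rw [Finset.mem_Ico] at hv; omega
    · intro i hi; rw [Finset.mem_range] at hi; omega
    · intro v hv; rfl
  rw [hre]
  induction (K - k) with
  | zero => simp
  | succ m ih =>
    rw [Finset.sum_range_succ, Nat.mul_add, ih, pow_succ]
    have : 1 ≤ (4:ℕ) ^ m := Nat.one_le_pow _ _ (by norm_num)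
    omega

lemma main_count (hk1 : 1 ≤ k) (hkK : k ≤ K)
    (M₀ : Matrix (Fin 3) (Fin 3) (ZMod (2 ^ k)))
    (hcol : ∀ i, M₀ i 2 = 0)
    (hα : IsUnit (M₀ 0 0)) (hB : Bf M₀ = 0) (hC : Cf M₀ = 0) :
    Nat.card {M : Matrix (Fin 3) (Fin 3) (ZMod (2 ^ K)) //
        (∀ i, M i 2 = 0) ∧
        (∀ i j, ZMod.castHom (pow_dvd_pow 2 hkK) (ZMod (2 ^ k)) (M i j) = M₀ i j) ∧
        ord2 K (Bf M) < ord2 K (Cf M)}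
      = (2 ^ (K - k)) ^ 4 * ∑ v ∈ Finset.Ico k K, 4 ^ (K - 1 - v) := by
  haveI : NeZero (2 ^ K) := ⟨by positivity⟩
  haveI : NeZero (2 ^ k) := ⟨by positivity⟩
  set red := ZMod.castHom (pow_dvd_pow 2 hkK) (ZMod (2 ^ k)) with hred
  set T := {x : ZMod (2 ^ K) // red x = M₀ 0 0} × {x : ZMod (2 ^ K) // red x = M₀ 0 1} ×
      {x : ZMod (2 ^ K) // red x = M₀ 1 0} × {x : ZMod (2 ^ K) // red x = M₀ 2 0} ×
      {p : ZMod (2 ^ K) × ZMod (2 ^ K) //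
        (2 : ZMod (2 ^ K)) ^ k ∣ p.1 ∧ (2 : ZMod (2 ^ K)) ^ k ∣ p.2 ∧
        ord2 K p.1 < ord2 K p.2} with hT
  have hcard : Nat.card T = (2 ^ (K - k)) ^ 4 * ∑ v ∈ Finset.Ico k K, 4 ^ (K - 1 - v) := by
    rw [hT, Nat.card_prod, Nat.card_prod, Nat.card_prod, Nat.card_prod,
      card_lift_set hkK, card_lift_set hkK, card_lift_set hkK, card_lift_set hkK, card_Q hkK]
    ring
  rw [← hcard]
  classical
  have hmul : ∀ (a z : ZMod (2 ^ K)), IsUnit a → a * (Ring.inverse a * z) = z := by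
    intro a z hu
    rw [← mul_assoc, Ring.mul_inverse_cancel _ hu, one_mul]
  have hredinv : ∀ a : ZMod (2 ^ K), red a = M₀ 0 0 →
      red (Ring.inverse a) * M₀ 0 0 = 1 := by
    intro a ha
    have hu : IsUnit a := (isUnit_red_iff hk1 hkK a).mp (by rw [← hred, ha]; exact hα)
    rw [← ha, ← map_mul, Ring.inverse_mul_cancel _ hu, map_one]
  have hBC : Bf M₀ = 0 ∧ Cf M₀ = 0 := ⟨hB, hC⟩
  set mat : ZMod (2 ^ K) → ZMod (2 ^ K) → ZMod (2 ^ K) → ZMod (2 ^ K) →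
      ZMod (2 ^ K) → ZMod (2 ^ K) → Matrix (Fin 3) (Fin 3) (ZMod (2 ^ K)) :=
    fun a b g e x y =>
      !![a, b, 0;
         g, Ring.inverse a * (y + b * g), 0;
         e, Ring.inverse a * (x + b * e), 0] with hmat
  have hBfmat : ∀ a b g e x y, IsUnit a → Bf (mat a b g e x y) = x := by
    intro a b g e x y hu
    simp [hmat, Bf, Matrix.vecHead, Matrix.vecTail]
    rw [mul_comm (Ring.inverse a) (x + b * e), ← mul_assoc,
      mul_comm a (x + b * e), mul_assoc, Ring.mul_inverse_cancel _ hu]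
    ring
  have hCfmat : ∀ a b g e x y, IsUnit a → Cf (mat a b g e x y) = y := by
    intro a b g e x y hu
    simp [hmat, Cf, Matrix.vecHead, Matrix.vecTail]
    rw [mul_comm (Ring.inverse a) (y + b * g), ← mul_assoc,
      mul_comm a (y + b * g), mul_assoc, Ring.mul_inverse_cancel _ hu]
    ring
  have key : ∀ (a b g e x y : ZMod (2 ^ K)), red a = M₀ 0 0 → red b = M₀ 0 1 →
      red g = M₀ 1 0 → red e = M₀ 2 0 → (2 : ZMod (2 ^ K)) ^ k ∣ x →
      (2 : ZMod (2 ^ K)) ^ k ∣ y → ord2 K x < ord2 K y →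
      (∀ i, mat a b g e x y i 2 = 0) ∧
      (∀ i j, red (mat a b g e x y i j) = M₀ i j) ∧
      ord2 K (Bf (mat a b g e x y)) < ord2 K (Cf (mat a b g e x y)) := by
    intro a b g e x y ha hb hg he hx hy hord
    have hu : IsUnit a := (isUnit_red_iff hk1 hkK a).mp (by rw [← hred, ha]; exact hα)
    have hx0 : red x = 0 := by rw [hred]; exact (red_zero_iff hkK x).mpr hx
    have hy0 : red y = 0 := by rw [hred]; exact (red_zero_iff hkK y).mpr hy
    refine ⟨?_, ?_, ?_⟩
    · intro i; fin_cases i <;> simp [hmat, Matrix.vecHead, Matrix.vecTail]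
    · intro i j
      fin_cases i <;> fin_cases j <;>
        simp [hmat, Matrix.vecHead, Matrix.vecTail, ha, hb, hg, he, map_mul, map_add,
          hx0, hy0, hcol 0, hcol 1, hcol 2]
      · -- red (Ring.inverse a) * (M₀ 0 1 * M₀ 1 0) = M₀ 1 1
        have hC' : M₀ 0 1 * M₀ 1 0 = M₀ 0 0 * M₀ 1 1 := by
          have := hBC.2; unfold Cf at this; linear_combination -this
        rw [hC', ← mul_assoc, mul_comm (red (Ring.inverse a)) (M₀ 0 0),
          mul_comm (M₀ 0 0) (red (Ring.inverse a)), hredinv a ha, one_mul]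
      · -- red (Ring.inverse a) * (M₀ 0 1 * M₀ 2 0) = M₀ 2 1
        have hB' : M₀ 0 1 * M₀ 2 0 = M₀ 0 0 * M₀ 2 1 := by
          have := hBC.1; unfold Bf at this; linear_combination -this
        rw [hB', ← mul_assoc, mul_comm (red (Ring.inverse a)) (M₀ 0 0),
          mul_comm (M₀ 0 0) (red (Ring.inverse a)), hredinv a ha, one_mul]
    · rw [hBfmat a b g e x y hu, hCfmat a b g e x y hu]
      exact hord
  refine (Nat.card_eq_of_bijective (fun t =>
    ⟨mat t.1.1 t.2.1.1 t.2.2.1.1 t.2.2.2.1.1 t.2.2.2.2.1.1 t.2.2.2.2.1.2,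
      key _ _ _ _ _ _ t.1.2 t.2.1.2 t.2.2.1.2 t.2.2.2.1.2 t.2.2.2.2.2.1
        t.2.2.2.2.2.2.1 t.2.2.2.2.2.2.2⟩) ⟨?_, ?_⟩).symm
  · -- injective
    rintro ⟨⟨a, ha⟩, ⟨b, hb⟩, ⟨g, hg⟩, ⟨e, he⟩, ⟨⟨x, y⟩, hx, hy, hord⟩⟩
      ⟨⟨a', ha'⟩, ⟨b', hb'⟩, ⟨g', hg'⟩, ⟨e', he'⟩, ⟨⟨x', y'⟩, hx', hy', hord'⟩⟩ hMeq
    have hM : mat a b g e x y = mat a' b' g' e' x' y' := congrArg Subtype.val hMeq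
    have hu : IsUnit a := (isUnit_red_iff hk1 hkK a).mp (by rw [← hred, ha]; exact hα)
    have hu' : IsUnit a' := (isUnit_red_iff hk1 hkK a').mp (by rw [← hred, ha']; exact hα)
    have e00 : a = a' := by have := congrFun (congrFun hM 0) 0; simpa [hmat] using this
    have e01 : b = b' := by have := congrFun (congrFun hM 0) 1; simpa [hmat] using this
    have e10 : g = g' := by have := congrFun (congrFun hM 1) 0; simpa [hmat] using this
    have e20 : e = e' := by have := congrFun (congrFun hM 2) 0; simpa [hmat] using this
    have ex : x = x' := by
      rw [← hBfmat a b g e x y hu, ← hBfmat a' b' g' e' x' y' hu', hM]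
    have ey : y = y' := by
      rw [← hCfmat a b g e x y hu, ← hCfmat a' b' g' e' x' y' hu', hM]
    subst e00; subst e01; subst e10; subst e20; subst ex; subst ey
    rfl
  · -- surjective
    rintro ⟨M, hz, hr, hord⟩
    have hu : IsUnit (M 0 0) := (isUnit_red_iff hk1 hkK (M 0 0)).mp
      (by rw [← hred, hr 0 0]; exact hα)
    have hxd : (2 : ZMod (2 ^ K)) ^ k ∣ Bf M := by
      rw [← red_zero_iff hkK, ← hred]
      have : red (Bf M) = Bf M₀ := by
        unfold Bf; rw [map_sub, map_mul, map_mul, hr 0 0, hr 2 1, hr 0 1, hr 2 0]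
      rw [this, hBC.1]
    have hyd : (2 : ZMod (2 ^ K)) ^ k ∣ Cf M := by
      rw [← red_zero_iff hkK, ← hred]
      have : red (Cf M) = Cf M₀ := by
        unfold Cf; rw [map_sub, map_mul, map_mul, hr 0 0, hr 1 1, hr 0 1, hr 1 0]
      rw [this, hBC.2]
    refine ⟨⟨⟨M 0 0, hr 0 0⟩, ⟨M 0 1, hr 0 1⟩, ⟨M 1 0, hr 1 0⟩, ⟨M 2 0, hr 2 0⟩,
      ⟨(Bf M, Cf M), hxd, hyd, hord⟩⟩, ?_⟩
    apply Subtype.ext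
    show mat (M 0 0) (M 0 1) (M 1 0) (M 2 0) (Bf M) (Cf M) = M
    ext i j
    fin_cases j
    · fin_cases i <;> simp [hmat, Matrix.vecHead, Matrix.vecTail]
    · fin_cases i
      · simp [hmat, Matrix.vecHead, Matrix.vecTail]
      · simp only [hmat, Matrix.cons_val', Matrix.cons_val_zero, Matrix.cons_val_one,
          Matrix.head_cons, Matrix.empty_val', Matrix.cons_val_fin_one, Matrix.head_fin_const,
          Matrix.of_apply, Fin.isValue]
        show Ring.inverse (M 0 0) * (Cf M + M 0 1 * M 1 0) = M 1 1
        unfold Cf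
        rw [sub_add_cancel, ← mul_assoc, mul_comm (Ring.inverse (M 0 0)) (M 0 0),
          Ring.mul_inverse_cancel _ hu, one_mul]
      · simp only [hmat, Matrix.cons_val', Matrix.cons_val_zero, Matrix.cons_val_one,
          Matrix.head_cons, Matrix.empty_val', Matrix.cons_val_fin_one, Matrix.head_fin_const,
          Matrix.of_apply, Fin.isValue]
        show Ring.inverse (M 0 0) * (Bf M + M 0 1 * M 2 0) = M 2 1
        unfold Bf
        rw [sub_add_cancel, ← mul_assoc, mul_comm (Ring.inverse (M 0 0)) (M 0 0),
          Ring.mul_inverse_cancel _ hu, one_mul]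
    · fin_cases i <;>
        simp [hmat, Matrix.vecHead, Matrix.vecTail, hz 0, hz 1, hz 2]
lemma cond_equiv {K : ℕ} (M : Matrix (Fin 3) (Fin 3) (ZMod (2 ^ K)))
    (hu : IsUnit (M 0 0)) (hg : (2 : ZMod (2 ^ K)) ∣ M 1 0) :
    (ord2 K (Bf M) < ord2 K (Af M) ∧ ord2 K (Bf M) < ord2 K (Cf M)) ↔
      ord2 K (Bf M) < ord2 K (Cf M) := by
  constructor
  · exact fun h => h.2
  · intro h
    refine ⟨?_, h⟩
    obtain ⟨hdC, hK⟩ := ord2_lt_iff.mp h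
    set j := ord2 K (Bf M) with hj
    have hrel : M 0 0 * Af M = M 1 0 * Bf M - M 2 0 * Cf M := by
      simp only [Af, Bf, Cf]; ring
    have h1 : (2 : ZMod (2 ^ K)) ^ (j + 1) ∣ M 1 0 * Bf M := by
      have := mul_dvd_mul hg (pow_ord2_dvd (t := Bf M))
      rwa [← pow_succ'] at this
    have h2 : (2 : ZMod (2 ^ K)) ^ (j + 1) ∣ M 2 0 * Cf M := Dvd.dvd.mul_left hdC _
    have h3 : (2 : ZMod (2 ^ K)) ^ (j + 1) ∣ M 0 0 * Af M := hrel ▸ dvd_sub h1 h2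
    have h4 : (2 : ZMod (2 ^ K)) ^ (j + 1) ∣ Af M := by
      have : Af M = Ring.inverse (M 0 0) * (M 0 0 * Af M) := by
        rw [← mul_assoc, Ring.inverse_mul_cancel _ hu, one_mul]
      rw [this]
      exact Dvd.dvd.mul_left h3 _
    exact ord2_lt_iff.mpr ⟨h4, hK⟩


section swaps
variable {n : ℕ}

/-- swap rows 0 and 2 -/
def rsw (M : Matrix (Fin 3) (Fin 3) (ZMod n)) : Matrix (Fin 3) (Fin 3) (ZMod n) :=
  Matrix.of fun i j => M (Equiv.swap (0 : Fin 3) 2 i) j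

/-- swap columns 0 and 1 -/
def csw (M : Matrix (Fin 3) (Fin 3) (ZMod n)) : Matrix (Fin 3) (Fin 3) (ZMod n) :=
  Matrix.of fun i j => M i (Equiv.swap (0 : Fin 3) 1 j)

lemma eta_rsw (r K : ℕ) (M₀ : Matrix (Fin 3) (Fin 3) (ZMod (2 ^ r))) :
    eta r K M₀ = eta r K (rsw M₀) := by
  have s0 : (Equiv.swap (0 : Fin 3) 2) 0 = 2 := by decide
  have s1 : (Equiv.swap (0 : Fin 3) 2) 1 = 1 := by decide
  have s2 : (Equiv.swap (0 : Fin 3) 2) 2 = 0 := by decide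
  have hinv : ∀ {n : ℕ} (M : Matrix (Fin 3) (Fin 3) (ZMod n)), rsw (rsw M) = M := by
    intro n M; ext i j; simp [rsw, Equiv.swap_apply_self]
  have hAf : ∀ M : Matrix (Fin 3) (Fin 3) (ZMod (2 ^ K)), Af (rsw M) = - Cf M := by
    intro M; simp only [rsw, Af, Cf, Matrix.of_apply, s0, s1, s2]; ring
  have hBf : ∀ M : Matrix (Fin 3) (Fin 3) (ZMod (2 ^ K)), Bf (rsw M) = - Bf M := by
    intro M; simp only [rsw, Af, Bf, Matrix.of_apply, s0, s1, s2]; ring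
  have hCf : ∀ M : Matrix (Fin 3) (Fin 3) (ZMod (2 ^ K)), Cf (rsw M) = - Af M := by
    intro M; simp only [rsw, Af, Cf, Matrix.of_apply, s0, s1, s2]; ring
  unfold eta
  refine Nat.card_congr (Equiv.subtypeEquiv ⟨rsw, rsw, fun M => hinv M, fun M => hinv M⟩
    fun M => ?_)
  simp only [Equiv.coe_fn_mk]
  constructor
  · rintro ⟨h1, h2, h3, h4⟩
    refine ⟨fun i => h1 _, fun i j => h2 _ j, ?_, ?_⟩
    · rw [hBf, hAf, ord2_neg, ord2_neg]; exact h4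
    · rw [hBf, hCf, ord2_neg, ord2_neg]; exact h3
  · rintro ⟨h1, h2, h3, h4⟩
    rw [hBf, hAf, ord2_neg, ord2_neg] at h3
    rw [hBf, hCf, ord2_neg, ord2_neg] at h4
    refine ⟨fun i => ?_, fun i j => ?_, h4, h3⟩
    · have := h1 (Equiv.swap (0 : Fin 3) 2 i)
      simpa [rsw, Equiv.swap_apply_self] using this
    · have := h2 (Equiv.swap (0 : Fin 3) 2 i) j
      simpa [rsw, Equiv.swap_apply_self] using this

lemma eta_csw (r K : ℕ) (M₀ : Matrix (Fin 3) (Fin 3) (ZMod (2 ^ r))) :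
    eta r K M₀ = eta r K (csw M₀) := by
  have s0 : (Equiv.swap (0 : Fin 3) 1) 0 = 1 := by decide
  have s1 : (Equiv.swap (0 : Fin 3) 1) 1 = 0 := by decide
  have s2 : (Equiv.swap (0 : Fin 3) 1) 2 = 2 := by decide
  have hinv : ∀ {n : ℕ} (M : Matrix (Fin 3) (Fin 3) (ZMod n)), csw (csw M) = M := by
    intro n M; ext i j; simp [csw, Equiv.swap_apply_self]
  have hAf : ∀ M : Matrix (Fin 3) (Fin 3) (ZMod (2 ^ K)), Af (csw M) = - Af M := by
    intro M; simp only [csw, Af, Matrix.of_apply, s0, s1, s2]; ring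
  have hBf : ∀ M : Matrix (Fin 3) (Fin 3) (ZMod (2 ^ K)), Bf (csw M) = - Bf M := by
    intro M; simp only [csw, Bf, Matrix.of_apply, s0, s1, s2]; ring
  have hCf : ∀ M : Matrix (Fin 3) (Fin 3) (ZMod (2 ^ K)), Cf (csw M) = - Cf M := by
    intro M; simp only [csw, Cf, Matrix.of_apply, s0, s1, s2]; ring
  unfold eta
  refine Nat.card_congr (Equiv.subtypeEquiv ⟨csw, csw, fun M => hinv M, fun M => hinv M⟩
    fun M => ?_)
  simp only [Equiv.coe_fn_mk]
  constructor
  · rintro ⟨h1, h2, h3, h4⟩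
    refine ⟨fun i => ?_, fun i j => h2 i _, ?_, ?_⟩
    · show M i ((Equiv.swap (0 : Fin 3) 1) 2) = 0
      rw [s2]; exact h1 i
    · rw [hBf, hAf, ord2_neg, ord2_neg]; exact h3
    · rw [hBf, hCf, ord2_neg, ord2_neg]; exact h4
  · rintro ⟨h1, h2, h3, h4⟩
    rw [hBf, hAf, ord2_neg, ord2_neg] at h3
    rw [hBf, hCf, ord2_neg, ord2_neg] at h4
    refine ⟨fun i => ?_, fun i j => ?_, h3, h4⟩
    · have := h1 i
      simpa [csw, s2] using this
    · have := h2 i (Equiv.swap (0 : Fin 3) 1 j)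
      simpa [csw, Equiv.swap_apply_self] using this
end swaps

lemma eta_formula {k K : ℕ} (hk1 : 1 ≤ k) (hkK : k ≤ K)
    (M₀ : Matrix (Fin 3) (Fin 3) (ZMod (2 ^ k)))
    (hcol : ∀ i, M₀ i 2 = 0)
    (hα : IsUnit (M₀ 0 0)) (hγ : ¬ IsUnit (M₀ 1 0))
    (hB : Bf M₀ = 0) (hC : Cf M₀ = 0) :
    eta k K M₀ = (2 ^ (K - k)) ^ 4 * ∑ v ∈ Finset.Ico k K, 4 ^ (K - 1 - v) := by
  haveI : NeZero (2 ^ K) := ⟨by positivity⟩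
  have hiff : ∀ M : Matrix (Fin 3) (Fin 3) (ZMod (2 ^ K)),
      ((∀ i, M i 2 = 0) ∧ (∀ i j, (((M i j).val : ℕ) : ZMod (2 ^ k)) = M₀ i j) ∧
        ord2 K (Bf M) < ord2 K (Af M) ∧ ord2 K (Bf M) < ord2 K (Cf M))
      ↔ ((∀ i, M i 2 = 0) ∧
        (∀ i j, ZMod.castHom (pow_dvd_pow 2 hkK) (ZMod (2 ^ k)) (M i j) = M₀ i j) ∧
        ord2 K (Bf M) < ord2 K (Cf M)) := by
    intro M
    have hcast : ∀ i j, (((M i j).val : ℕ) : ZMod (2 ^ k))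
        = ZMod.castHom (pow_dvd_pow 2 hkK) (ZMod (2 ^ k)) (M i j) :=
      fun i j => red_eq_castHom hkK _
    constructor
    · rintro ⟨h1, h2, h3, h4⟩
      exact ⟨h1, fun i j => (hcast i j) ▸ h2 i j, h4⟩
    · rintro ⟨h1, h2, h3⟩
      have hu : IsUnit (M 0 0) := (isUnit_red_iff hk1 hkK _).mp (by rw [h2 0 0]; exact hα)
      have hg : (2 : ZMod (2 ^ K)) ∣ M 1 0 :=
        two_dvd_of_not_isUnit hk1 hkK _ (by rw [h2 1 0]; exact hγ)
      obtain ⟨hA', hC'⟩ := (cond_equiv M hu hg).mpr h3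
      exact ⟨h1, fun i j => (hcast i j).symm ▸ h2 i j, hA', hC'⟩
  unfold eta
  rw [Nat.card_congr (Equiv.subtypeEquivRight hiff)]
  exact main_count hk1 hkK M₀ hcol hα hB hC

lemma tendsto_of_unit (k : ℕ) (hk : 3 ≤ k) (M₀ N : Matrix (Fin 3) (Fin 3) (ZMod (2 ^ k)))
    (hEq : ∀ K, eta k K M₀ = eta k K N)
    (hcolN : ∀ i, N i 2 = 0) (hαN : IsUnit (N 0 0)) (hγN : ¬ IsUnit (N 1 0))
    (hBN : Bf N = 0) (hCN : Cf N = 0) :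
    Tendsto (fun K : ℕ => (eta k K M₀ : ℝ) / (8192 * 64 ^ (K - 3))) atTop
      (nhds (1 / (6 * 64 ^ (k - 1)))) := by
  have hle : ∀ m : ℕ, (16 : ℕ) ^ m ≤ 64 ^ m := fun m => Nat.pow_le_pow_left (by norm_num) m
  have hnat : ∀ K, k ≤ K → 3 * eta k K M₀ = 64 ^ (K - k) - 16 ^ (K - k) := by
    intro K hkK
    rw [hEq K, eta_formula (by omega) hkK N hcolN hαN hγN hBN hCN, ← Nat.mul_assoc,
      Nat.mul_comm 3 ((2 ^ (K - k)) ^ 4), Nat.mul_assoc, my_sum_Ico_pow hkK]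
    have h16 : ((2 : ℕ) ^ (K - k)) ^ 4 = 16 ^ (K - k) := by
      rw [← pow_mul, mul_comm, pow_mul]; norm_num
    rw [h16, Nat.mul_sub, mul_one, ← mul_pow]
    norm_num
  have h0 : Tendsto (fun K : ℕ => ((1 / 4 : ℝ)) ^ K) atTop (nhds 0) :=
    tendsto_pow_atTop_nhds_zero_of_lt_one (by norm_num) (by norm_num)
  have hmain : Tendsto (fun K : ℕ => (1 / (6 * 64 ^ (k - 1)) : ℝ)
      - (32 / (3 * 16 ^ k)) * (1 / 4 : ℝ) ^ K) atTop (nhds (1 / (6 * 64 ^ (k - 1)))) := by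
    have h1 := h0.const_mul (32 / (3 * 16 ^ k) : ℝ)
    have h2 := (tendsto_const_nhds (x := (1 / (6 * 64 ^ (k - 1)) : ℝ))
      (f := atTop (α := ℕ))).sub h1
    simpa using h2
  refine Tendsto.congr' ?_ hmain
  filter_upwards [eventually_ge_atTop k] with K hkK
  have hcast : (eta k K M₀ : ℝ) = ((64 : ℝ) ^ (K - k) - 16 ^ (K - k)) / 3 := by
    have h := hnat K hkK
    have hR : ((3 * eta k K M₀ : ℕ) : ℝ) = ((64 ^ (K - k) - 16 ^ (K - k) : ℕ) : ℝ) := by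
      rw [h]
    rw [Nat.cast_mul, Nat.cast_sub (hle _)] at hR
    push_cast at hR
    linarith
  rw [hcast]
  obtain ⟨m, rfl⟩ : ∃ m, K = k + m := ⟨K - k, by omega⟩
  obtain ⟨a, rfl⟩ : ∃ a, k = 3 + a := ⟨k - 3, by omega⟩
  have e1 : 3 + a + m - (3 + a) = m := by omega
  have e2 : 3 + a + m - 3 = a + m := by omega
  have e3 : 3 + a - 1 = 2 + a := by omega
  rw [e1, e2, e3]
  have e64 : ∀ x : ℕ, (64 : ℝ) ^ x = ((4 : ℝ) ^ x) ^ 3 := by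
    intro x
    rw [show (64 : ℝ) = 4 ^ 3 by norm_num, ← pow_mul, mul_comm, pow_mul]
  have e16 : ∀ x : ℕ, (16 : ℝ) ^ x = ((4 : ℝ) ^ x) ^ 2 := by
    intro x
    rw [show (16 : ℝ) = 4 ^ 2 by norm_num, ← pow_mul, mul_comm, pow_mul]
  have e4 : ∀ x : ℕ, ((1 / 4 : ℝ)) ^ x = ((4 : ℝ) ^ x)⁻¹ := by
    intro x
    rw [one_div, inv_pow]
  rw [pow_add (64 : ℝ) 2 a, pow_add (16 : ℝ) 3 a, pow_add (64 : ℝ) a m,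
    pow_add (1/4 : ℝ) (3 + a) m, pow_add (1/4 : ℝ) 3 a,
    e64 a, e64 m, e16 a, e16 m, e4 a, e4 m]
  have hP : (4 : ℝ) ^ a ≠ 0 := by positivity
  have hQ : (4 : ℝ) ^ m ≠ 0 := by positivity
  field_simp
  ring

theorem density_of_gamma_delta_even_case (k : ℕ) (hk : 3 ≤ k)
    (M₀ : Matrix (Fin 3) (Fin 3) (ZMod (2 ^ k)))
    (hcol : ∀ i, M₀ i 2 = 0)
    (hA : Af M₀ = 0) (hB : Bf M₀ = 0) (hC : Cf M₀ = 0)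
    (hγ : ¬ IsUnit (M₀ 1 0)) (hδ : ¬ IsUnit (M₀ 1 1))
    (hodd : IsUnit (M₀ 0 0) ∨ IsUnit (M₀ 0 1) ∨ IsUnit (M₀ 2 0) ∨ IsUnit (M₀ 2 1)) :
    Tendsto (fun K : ℕ => (eta k K M₀ : ℝ) / (8192 * 64 ^ (K - 3))) atTop
      (nhds (1 / (6 * 64 ^ (k - 1)))) := by
  have r0 : (Equiv.swap (0 : Fin 3) 2) 0 = 2 := by decide
  have r1 : (Equiv.swap (0 : Fin 3) 2) 1 = 1 := by decide
  have r2 : (Equiv.swap (0 : Fin 3) 2) 2 = 0 := by decide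
  have c0 : (Equiv.swap (0 : Fin 3) 1) 0 = 1 := by decide
  have c1 : (Equiv.swap (0 : Fin 3) 1) 1 = 0 := by decide
  have c2 : (Equiv.swap (0 : Fin 3) 1) 2 = 2 := by decide
  have hAc : Af (csw M₀) = - Af M₀ := by
    simp only [csw, Af, Matrix.of_apply, c0, c1, c2]; ring
  have hBc : Bf (csw M₀) = - Bf M₀ := by
    simp only [csw, Bf, Matrix.of_apply, c0, c1, c2]; ring
  have hCc : Cf (csw M₀) = - Cf M₀ := by
    simp only [csw, Cf, Matrix.of_apply, c0, c1, c2]; ring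
  have hAr : Af (rsw M₀) = - Cf M₀ := by
    simp only [rsw, Af, Cf, Matrix.of_apply, r0, r1, r2]; ring
  have hBr : Bf (rsw M₀) = - Bf M₀ := by
    simp only [rsw, Bf, Matrix.of_apply, r0, r1, r2]; ring
  have hCr : Cf (rsw M₀) = - Af M₀ := by
    simp only [rsw, Af, Cf, Matrix.of_apply, r0, r1, r2]; ring
  have hBcr : Bf (csw (rsw M₀)) = Bf M₀ := by
    have : Bf (csw (rsw M₀)) = - Bf (rsw M₀) := by
      simp only [csw, Bf, Matrix.of_apply, c0, c1, c2]; ring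
    rw [this, hBr, neg_neg]
  have hCcr : Cf (csw (rsw M₀)) = Af M₀ := by
    have : Cf (csw (rsw M₀)) = - Cf (rsw M₀) := by
      simp only [csw, Cf, Matrix.of_apply, c0, c1, c2]; ring
    rw [this, hCr, neg_neg]
  rcases hodd with h | h | h | h
  · exact tendsto_of_unit k hk M₀ M₀ (fun K => rfl) hcol h hγ hB hC
  · refine tendsto_of_unit k hk M₀ (csw M₀) (fun K => eta_csw k K M₀) ?_ ?_ ?_ ?_ ?_
    · intro i
      show M₀ i ((Equiv.swap (0 : Fin 3) 1) 2) = 0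
      rw [c2]; exact hcol i
    · show IsUnit (M₀ 0 ((Equiv.swap (0 : Fin 3) 1) 0))
      rw [c0]; exact h
    · show ¬ IsUnit (M₀ 1 ((Equiv.swap (0 : Fin 3) 1) 0))
      rw [c0]; exact hδ
    · rw [hBc, hB, neg_zero]
    · rw [hCc, hC, neg_zero]
  · refine tendsto_of_unit k hk M₀ (rsw M₀) (fun K => eta_rsw k K M₀) ?_ ?_ ?_ ?_ ?_
    · intro i
      show M₀ ((Equiv.swap (0 : Fin 3) 2) i) 2 = 0
      exact hcol _
    · show IsUnit (M₀ ((Equiv.swap (0 : Fin 3) 2) 0) 0)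
      rw [r0]; exact h
    · show ¬ IsUnit (M₀ ((Equiv.swap (0 : Fin 3) 2) 1) 0)
      rw [r1]; exact hγ
    · rw [hBr, hB, neg_zero]
    · rw [hCr, hA, neg_zero]
  · refine tendsto_of_unit k hk M₀ (csw (rsw M₀))
      (fun K => (eta_rsw k K M₀).trans (eta_csw k K (rsw M₀))) ?_ ?_ ?_ ?_ ?_
    · intro i
      show M₀ ((Equiv.swap (0 : Fin 3) 2) i) ((Equiv.swap (0 : Fin 3) 1) 2) = 0
      rw [c2]; exact hcol _
    · show IsUnit (M₀ ((Equiv.swap (0 : Fin 3) 2) 0) ((Equiv.swap (0 : Fin 3) 1) 0))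
      rw [r0, c0]; exact h
    · show ¬ IsUnit (M₀ ((Equiv.swap (0 : Fin 3) 2) 1) ((Equiv.swap (0 : Fin 3) 1) 0))
      rw [r1, c0]; exact hδ
    · rw [hBcr]; exact hB
    · rw [hCcr]; exact hA
end cards
end helper
end
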